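/- The weighted Myerson value on restricted networks satisfies the recursion: for every network g, value function v, positive weights w, subset S ⊆ N, and i ∈ S, Y_i^{w-MV}(g|_S, v) = (1/Σ_{j∈S} w_j) [ w_i (v(g|_S) − v(g|_S \ g_i)) + Σ_{j∈S, j≠i} w_j Y_i^{w-MV}(g|_S \ g_j, v) ]. -/

import Mathlib

/-!
Write `wMV w v g i` as the sum, over subnetworks `g' ⊆ g` in which `i` is active, of the share
`w i / w (players g')` of the Harsanyi dividend of `g'`. The subnetworks of `g \ glinks g j` are
exactly those in which `j` is inactive, so the sum over `j ∈ S \ {i}` multiplies each term by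
`w S - w (players g')`. By Möbius inversion `v g - v (g \ glinks g i)` is the sum of the
dividends of the subnetworks in which `i` is active, so `w i` times it contributes each term once
more with factor `w (players g')`. Altogether every term is multiplied by `w S`.
-/

open Finset

variable {n : ℕ}

/-- A network on player set `Fin n`: a finite set of (unordered) links. -/
abbrev Network (n : ℕ) := Finset (Sym2 (Fin n))

/-- The set of non-isolated players of a network. -/
def players (g : Network n) : Finset (Fin n) :=
  Finset.univ.filter (fun i => ∃ e ∈ g, i ∈ e)

/-- Harsanyi dividend of a value function at a network. -/
noncomputable def dividend (v : Network n → ℝ) (g' : Network n) : ℝ :=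
  ∑ g'' ∈ g'.powerset, (-1 : ℝ) ^ (g'.card - g''.card) * v g''

/-- The weighted Myerson value. -/
noncomputable def wMV (w : Fin n → ℝ) (v : Network n → ℝ) (g : Network n) (i : Fin n) : ℝ :=
  ∑ g' ∈ g.powerset.filter (fun g' => i ∈ players g'),
    (w i / ∑ j ∈ players g', w j) * dividend v g'

/-- Connectivity of two players through links of `g`. -/
def connectedIn (g : Network n) (i j : Fin n) : Prop :=
  Relation.ReflTransGen (fun a b => s(a, b) ∈ g) i j

open Classical in
/-- The component of `g` containing the link `e`. -/
noncomputable def component (g : Network n) (e : Sym2 (Fin n)) : Network n :=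
  g.filter (fun e' => ∃ i ∈ e, ∃ j ∈ e', connectedIn g i j)

/-- The set of components (maximal connected subnetworks) of `g`. -/
noncomputable def components (g : Network n) : Finset (Network n) :=
  g.image (component g)

/-- Component additive value functions. -/
def componentAdditive (v : Network n → ℝ) : Prop :=
  ∀ g : Network n, v g = ∑ h ∈ components g, v h

open Classical in
/-- The restriction `g|_S` of a network to a coalition `S`. -/
noncomputable def restrict (g : Network n) (S : Finset (Fin n)) : Network n :=
  g.filter (fun e => ∀ i ∈ e, i ∈ S)

/-- The set `g_i` of links of player `i` in `g`. -/
def glinks (g : Network n) (i : Fin n) : Network n :=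
  g.filter (fun e => i ∈ e)

lemma sum_powerset_neg_one_pow_card_real {α : Type*} [DecidableEq α] (s : Finset α) :
    ∑ t ∈ s.powerset, (-1 : ℝ) ^ #t = if s = ∅ then 1 else 0 := by
  exact_mod_cast congrArg (Int.cast : ℤ → ℝ) sum_powerset_neg_one_pow_card

lemma sum_superset_neg_one_pow_card_sub {α : Type*} [DecidableEq α] {u s : Finset α}
    (hus : u ⊆ s) :
    ∑ t ∈ s.powerset with u ⊆ t, (-1 : ℝ) ^ (#t - #u) = if u = s then 1 else 0 := by
  have hsdiff : s \ u = ∅ ↔ u = s :=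
    ⟨fun h => hus.antisymm (sdiff_eq_empty_iff_subset.1 h), fun h => h ▸ sdiff_self⟩
  rw [← if_congr hsdiff rfl rfl, ← sum_powerset_neg_one_pow_card_real]
  refine sum_nbij' (· \ u) (u ∪ ·) ?_ ?_ ?_ ?_ ?_
  · intro t ht
    simp only [mem_filter, mem_powerset] at ht ⊢
    exact sdiff_subset_sdiff ht.1 le_rfl
  · intro t ht
    simp only [mem_filter, mem_powerset] at ht ⊢
    exact ⟨union_subset hus (ht.trans sdiff_subset), subset_union_left⟩
  · intro t ht
    simp only [mem_filter, mem_powerset] at ht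
    exact union_sdiff_of_subset ht.2
  · intro t ht
    simp only [mem_powerset] at ht
    exact union_sdiff_cancel_left (disjoint_sdiff.mono_right ht)
  · intro t ht
    simp only [mem_filter, mem_powerset] at ht
    rw [card_sdiff_of_subset ht.2]

theorem sum_powerset_sum_powerset_neg_one_pow_mul {α : Type*} [DecidableEq α]
    (f : Finset α → ℝ) (s : Finset α) :
    ∑ t ∈ s.powerset, ∑ u ∈ t.powerset, (-1 : ℝ) ^ (#t - #u) * f u = f s := by
  rw [sum_comm' (t' := s.powerset) (s' := fun u => s.powerset.filter (u ⊆ ·))]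
  · calc ∑ u ∈ s.powerset, ∑ t ∈ s.powerset with u ⊆ t, (-1 : ℝ) ^ (#t - #u) * f u
        = ∑ u ∈ s.powerset, (if u = s then 1 else 0) * f u :=
          sum_congr rfl fun u hu => by
            rw [← sum_mul, sum_superset_neg_one_pow_card_sub (mem_powerset.1 hu)]
      _ = f s := by simp
  · intro t u
    simp only [mem_powerset, mem_filter]
    exact ⟨fun ⟨hts, hut⟩ => ⟨⟨hts, hut⟩, hut.trans hts⟩, fun ⟨⟨hts, hut⟩, _⟩ => ⟨hts, hut⟩⟩

theorem sum_powerset_dividend (v : Network n → ℝ) (g : Network n) :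
    ∑ g' ∈ g.powerset, dividend v g' = v g :=
  sum_powerset_sum_powerset_neg_one_pow_mul v g

lemma players_mono {g g' : Network n} (h : g' ⊆ g) : players g' ⊆ players g := by
  intro k hk
  simp only [players, mem_filter, mem_univ, true_and] at hk ⊢
  obtain ⟨e, he, hke⟩ := hk
  exact ⟨e, h he, hke⟩

lemma players_restrict_subset (g : Network n) (S : Finset (Fin n)) :
    players (restrict g S) ⊆ S := by
  intro k hk
  simp only [players, _root_.restrict, mem_filter, mem_univ, true_and] at hk
  obtain ⟨e, ⟨_, heS⟩, hke⟩ := hk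
  exact heS k hke

lemma powerset_sdiff_glinks (g : Network n) (j : Fin n) :
    (g \ glinks g j).powerset = g.powerset.filter (fun g' => j ∉ players g') := by
  ext g'
  simp only [mem_powerset, mem_filter, players, glinks, mem_univ, true_and, subset_iff,
    mem_sdiff, not_exists, not_and]
  exact ⟨fun h => ⟨fun e he => (h he).1, fun e he hje => (h he).2 (h he).1 hje⟩,
    fun ⟨hsub, hnot⟩ e he => ⟨hsub he, fun _ => hnot e he⟩⟩

theorem sub_sdiff_glinks_eq_sum_dividend (v : Network n → ℝ) (g : Network n) (i : Fin n) :
    v g - v (g \ glinks g i) = ∑ g' ∈ g.powerset with i ∈ players g', dividend v g' := by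
  rw [← sum_powerset_dividend v g, ← sum_powerset_dividend v (g \ glinks g i),
    powerset_sdiff_glinks, ← sum_filter_add_sum_filter_not g.powerset (i ∈ players ·),
    add_sub_cancel_right]

theorem wMV_sdiff_glinks (w : Fin n → ℝ) (v : Network n → ℝ) (g : Network n) (i j : Fin n) :
    wMV w v (g \ glinks g j) i = ∑ g' ∈ g.powerset with i ∈ players g',
      if j ∈ players g' then 0 else (w i / ∑ k ∈ players g', w k) * dividend v g' := by
  rw [wMV, powerset_sdiff_glinks, filter_filter, sum_ite, sum_const_zero, zero_add,
    filter_filter]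
  simp only [and_comm]

lemma filter_notMem_erase_eq_sdiff {α : Type*} [DecidableEq α] {P S : Finset α} {i : α}
    (hi : i ∈ P) : (S.erase i).filter (· ∉ P) = S \ P := by
  ext j
  simp only [mem_filter, mem_erase, mem_sdiff]
  exact ⟨fun ⟨⟨_, hjS⟩, hjP⟩ => ⟨hjS, hjP⟩,
    fun ⟨hjS, hjP⟩ => ⟨⟨(ne_of_mem_of_not_mem hi hjP).symm, hjS⟩, hjP⟩⟩

theorem sum_mul_wMV_sdiff_glinks (w : Fin n → ℝ) (v : Network n → ℝ) {g : Network n}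
    {S : Finset (Fin n)} (hg : players g ⊆ S) (i : Fin n) :
    ∑ j ∈ S.erase i, w j * wMV w v (g \ glinks g j) i
      = ∑ g' ∈ g.powerset with i ∈ players g', (∑ j ∈ S, w j - ∑ k ∈ players g', w k) *
          ((w i / ∑ k ∈ players g', w k) * dividend v g') := by
  simp_rw [wMV_sdiff_glinks, mul_sum]
  rw [sum_comm]
  refine sum_congr rfl fun g' hg' => ?_
  obtain ⟨hg'g, hi⟩ := mem_filter.1 hg'
  simp_rw [mul_ite, mul_zero]
  rw [sum_ite, sum_const_zero, zero_add, filter_notMem_erase_eq_sdiff hi,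
    ← sum_sdiff_eq_sub ((players_mono (mem_powerset.1 hg'g)).trans hg), sum_mul]

theorem wMV_recursion (w : Fin n → ℝ) (hw : ∀ k, 0 < w k) (v : Network n → ℝ)
    {g : Network n} {S : Finset (Fin n)} (hg : players g ⊆ S) {i : Fin n} (hi : i ∈ S) :
    wMV w v g i = (1 / ∑ j ∈ S, w j) *
      (w i * (v g - v (g \ glinks g i)) + ∑ j ∈ S.erase i, w j * wMV w v (g \ glinks g j) i) := by
  have hS : (∑ j ∈ S, w j) ≠ 0 := (sum_pos (fun k _ => hw k) ⟨i, hi⟩).ne'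
  rw [sub_sdiff_glinks_eq_sum_dividend, sum_mul_wMV_sdiff_glinks w v hg, mul_sum,
    ← sum_add_distrib, mul_sum, wMV]
  refine sum_congr rfl fun g' hg' => ?_
  have hW : (∑ k ∈ players g', w k) ≠ 0 :=
    (sum_pos (fun k _ => hw k) ⟨i, (mem_filter.1 hg').2⟩).ne'
  field_simp
  ring

theorem wMV_recursion_restricted_general (w : Fin n → ℝ) (hw : ∀ k, 0 < w k)
    (v : Network n → ℝ) (g : Network n)
    (S : Finset (Fin n)) (i : Fin n) (hi : i ∈ S) :
    wMV w v (restrict g S) i = (1 / ∑ j ∈ S, w j) *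
      (w i * (v (restrict g S) - v (restrict g S \ glinks (restrict g S) i)) +
        ∑ j ∈ S.erase i, w j * wMV w v (restrict g S \ glinks (restrict g S) j) i) :=
  wMV_recursion w hw v (players_restrict_subset g S) hi

/-- Recursive formula for the weighted Myerson value on restricted networks. -/
theorem wMV_recursion_restricted (w : Fin n → ℝ) (hw : ∀ k, 0 < w k)
    (v : Network n → ℝ) (hv : v ∅ = 0) (g : Network n)
    (S : Finset (Fin n)) (i : Fin n) (hi : i ∈ S) :
    wMV w v (restrict g S) i = (1 / ∑ j ∈ S, w j) *
      (w i * (v (restrict g S) - v (restrict g S \ glinks (restrict g S) i)) +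
        ∑ j ∈ S.erase i, w j * wMV w v (restrict g S \ glinks (restrict g S) j) i) :=
  wMV_recursion_restricted_general w hw v g S i hi
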